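/- Let η(t,s) be a smooth solution of the uniformly compressing curve-shortening flow ∂_t η = L⁻² ∂_s(σ̃ ∂_s η), where |∂_s η(t,s)| ≡ L(t) and σ̃ satisfies ∂_{ss}σ̃ − L⁻² σ̃ |∂_{ss}η|² = −L⁻² ∫₀¹ σ̃ |∂_{ss}η|² ds with ∫₀¹ σ̃ ds = 1. Then ∂_t L(t) = −L(t)⁻³ ∫₀¹ σ̃(t,s) |∂_{ss}η(t,s)|² ds. -/

import Mathlib

open Real MeasureTheory intervalIntegral

noncomputable section

/-- Evolution of the length along the uniformly compressing curve-shortening flow: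
`∂_t L = -L⁻³ ∫ σ̃ |∂_ss η|² ds`. -/
theorem stmt3 (d : ℕ)
    (η : ℝ → ℝ → EuclideanSpace ℝ (Fin d)) (σt : ℝ → ℝ → ℝ) (L : ℝ → ℝ)
    (hη : ContDiff ℝ (⊤ : ℕ∞) (fun p : ℝ × ℝ => η p.1 p.2))
    (hσt : ContDiff ℝ (⊤ : ℕ∞) (fun p : ℝ × ℝ => σt p.1 p.2))
    (hperη : ∀ t, Function.Periodic (η t) 1)
    (hperσ : ∀ t, Function.Periodic (σt t) 1)
    (hLpos : ∀ t, 0 < L t)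
    (hspeed : ∀ t s, ‖deriv (η t) s‖ = L t)
    (hflow : ∀ t s, deriv (fun u => η u s) t
        = ((L t) ^ 2)⁻¹ • deriv (fun r => σt t r • deriv (η t) r) s)
    (hmult : ∀ t s, deriv (deriv (σt t)) s
        - ((L t) ^ 2)⁻¹ * σt t s * ‖deriv (deriv (η t)) s‖ ^ 2
        = -((L t) ^ 2)⁻¹ * ∫ r in (0:ℝ)..1, σt t r * ‖deriv (deriv (η t)) r‖ ^ 2)
    (hσmean : ∀ t, (∫ s in (0:ℝ)..1, σt t s) = 1)
    :
    ∀ t, deriv L t = -((L t) ^ 3)⁻¹ * ∫ s in (0:ℝ)..1, σt t s * ‖deriv (deriv (η t)) s‖ ^ 2 := by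
  intro t
  have hA : ContDiff ℝ (⊤ : ℕ∞) (fderiv ℝ (fun p : ℝ × ℝ => η p.1 p.2)) :=
    hη.fderiv_right (by simp)
  have hFd : Differentiable ℝ (fun p : ℝ × ℝ => η p.1 p.2) := hη.differentiable (by simp)
  have hAd : Differentiable ℝ (fderiv ℝ (fun p : ℝ × ℝ => η p.1 p.2)) :=
    hA.differentiable (by simp)
  -- partial derivatives as the full fderiv applied to basis vectors
  have pd_s : ∀ u r : ℝ,
      HasDerivAt (η u) (fderiv ℝ (fun p : ℝ × ℝ => η p.1 p.2) (u, r) (0, 1)) r := by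
    intro u r
    have hcurve : HasDerivAt (fun x : ℝ => ((u, x) : ℝ × ℝ)) ((0 : ℝ), (1 : ℝ)) r :=
      (hasDerivAt_const r u).prodMk (hasDerivAt_id r)
    exact (hFd (u, r)).hasFDerivAt.comp_hasDerivAt r hcurve
  have pd_t : ∀ u r : ℝ,
      HasDerivAt (fun x => η x r) (fderiv ℝ (fun p : ℝ × ℝ => η p.1 p.2) (u, r) (1, 0)) u := by
    intro u r
    have hcurve : HasDerivAt (fun x : ℝ => ((x, r) : ℝ × ℝ)) ((1 : ℝ), (0 : ℝ)) u :=
      (hasDerivAt_id u).prodMk (hasDerivAt_const u r)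
    exact (hFd (u, r)).hasFDerivAt.comp_hasDerivAt u hcurve
  -- symmetry of second derivative at (t,0)
  have hsymm : ∀ v w : ℝ × ℝ,
      fderiv ℝ (fderiv ℝ (fun p : ℝ × ℝ => η p.1 p.2)) (t, 0) v w
      = fderiv ℝ (fderiv ℝ (fun p : ℝ × ℝ => η p.1 p.2)) (t, 0) w v :=
    second_derivative_symmetric (fun y => (hFd y).hasFDerivAt) (hAd (t, 0)).hasFDerivAt
  -- ∂_t of ∂_s η at (t,0)
  have hBt : HasDerivAt (fun u => fderiv ℝ (fun p : ℝ × ℝ => η p.1 p.2) (u, 0))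
      (fderiv ℝ (fderiv ℝ (fun p : ℝ × ℝ => η p.1 p.2)) (t, 0) (1, 0)) t := by
    have hcurve : HasDerivAt (fun x : ℝ => ((x, (0:ℝ)) : ℝ × ℝ)) ((1 : ℝ), (0 : ℝ)) t :=
      (hasDerivAt_id t).prodMk (hasDerivAt_const t 0)
    exact (hAd (t, 0)).hasFDerivAt.comp_hasDerivAt t hcurve
  have htg : HasDerivAt (fun u => fderiv ℝ (fun p : ℝ × ℝ => η p.1 p.2) (u, 0) (0, 1))
      (fderiv ℝ (fderiv ℝ (fun p : ℝ × ℝ => η p.1 p.2)) (t, 0) (1, 0) (0, 1)) t := by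
    have := hBt.clm_apply (hasDerivAt_const t ((0 : ℝ), (1 : ℝ)))
    simpa using this
  -- ∂_s of ∂_t η at (t,0)
  have hBs : HasDerivAt (fun r => fderiv ℝ (fun p : ℝ × ℝ => η p.1 p.2) (t, r))
      (fderiv ℝ (fderiv ℝ (fun p : ℝ × ℝ => η p.1 p.2)) (t, 0) (0, 1)) 0 := by
    have hcurve : HasDerivAt (fun x : ℝ => ((t, x) : ℝ × ℝ)) ((0 : ℝ), (1 : ℝ)) 0 :=
      (hasDerivAt_const 0 t).prodMk (hasDerivAt_id 0)
    exact (hAd (t, 0)).hasFDerivAt.comp_hasDerivAt 0 hcurve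
  have hsg : HasDerivAt (fun r => fderiv ℝ (fun p : ℝ × ℝ => η p.1 p.2) (t, r) (1, 0))
      (fderiv ℝ (fderiv ℝ (fun p : ℝ × ℝ => η p.1 p.2)) (t, 0) (0, 1) (1, 0)) 0 := by
    have := hBs.clm_apply (hasDerivAt_const 0 ((1 : ℝ), (0 : ℝ)))
    simpa using this
  -- one-variable smoothness at time t
  have hγ : ContDiff ℝ (⊤ : ℕ∞) (η t) := by
    have : ContDiff ℝ (⊤ : ℕ∞) (η t) := hη.comp (contDiff_const.prodMk contDiff_id)
    exact this.of_le (by simp)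
  have hσ : ContDiff ℝ (⊤ : ℕ∞) (σt t) := by
    have : ContDiff ℝ (⊤ : ℕ∞) (σt t) := hσt.comp (contDiff_const.prodMk contDiff_id)
    exact this.of_le (by simp)
  have hg1 : ContDiff ℝ (⊤ : ℕ∞) (deriv (η t)) := (contDiff_infty_iff_deriv.mp hγ).2
  have hg2 : ContDiff ℝ (⊤ : ℕ∞) (deriv (deriv (η t))) := (contDiff_infty_iff_deriv.mp hg1).2
  have hσ1 : ContDiff ℝ (⊤ : ℕ∞) (deriv (σt t)) := (contDiff_infty_iff_deriv.mp hσ).2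
  have hg1d : ∀ x, HasDerivAt (deriv (η t)) (deriv (deriv (η t)) x) x := fun x =>
    ((hg1.differentiable (by simp)) x).hasDerivAt
  have hg2d : ∀ x, HasDerivAt (deriv (deriv (η t))) (deriv (deriv (deriv (η t))) x) x := fun x =>
    ((hg2.differentiable (by simp)) x).hasDerivAt
  have hσd : ∀ x, HasDerivAt (σt t) (deriv (σt t) x) x := fun x =>
    ((hσ.differentiable (by simp)) x).hasDerivAt
  have hσ1d : ∀ x, HasDerivAt (deriv (σt t)) (deriv (deriv (σt t)) x) x := fun x =>
    ((hσ1.differentiable (by simp)) x).hasDerivAt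
  -- orthogonality relations
  have horth : ∀ x, (inner ℝ (deriv (deriv (η t)) x) (deriv (η t) x) : ℝ) = 0 := by
    intro x
    have h1 : HasDerivAt (fun y => (inner ℝ (deriv (η t) y) (deriv (η t) y) : ℝ))
        (inner ℝ (deriv (η t) x) (deriv (deriv (η t)) x)
          + inner ℝ (deriv (deriv (η t)) x) (deriv (η t) x)) x :=
      (hg1d x).inner ℝ (hg1d x)
    have h2 : (fun y => (inner ℝ (deriv (η t) y) (deriv (η t) y) : ℝ)) = fun _ => (L t) ^ 2 := by
      funext y
      rw [real_inner_self_eq_norm_sq, hspeed]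
    rw [h2] at h1
    have h3 := h1.unique (hasDerivAt_const x _)
    have hc : (inner ℝ (deriv (η t) x) (deriv (deriv (η t)) x) : ℝ)
        = inner ℝ (deriv (deriv (η t)) x) (deriv (η t) x) := real_inner_comm _ _
    linarith [h3, hc]
  have horth3 : (inner ℝ (deriv (deriv (deriv (η t))) 0) (deriv (η t) 0) : ℝ)
      = -‖deriv (deriv (η t)) 0‖ ^ 2 := by
    have h1 : HasDerivAt (fun y => (inner ℝ (deriv (deriv (η t)) y) (deriv (η t) y) : ℝ))
        (inner ℝ (deriv (deriv (η t)) 0) (deriv (deriv (η t)) 0)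
          + inner ℝ (deriv (deriv (deriv (η t))) 0) (deriv (η t) 0)) 0 :=
      (hg2d 0).inner ℝ (hg1d 0)
    have h2 : (fun y => (inner ℝ (deriv (deriv (η t)) y) (deriv (η t) y) : ℝ))
        = fun _ => (0 : ℝ) := funext horth
    rw [h2] at h1
    have h3 := h1.unique (hasDerivAt_const 0 _)
    have h4 : (inner ℝ (deriv (deriv (η t)) 0) (deriv (deriv (η t)) 0) : ℝ)
        = ‖deriv (deriv (η t)) 0‖ ^ 2 := real_inner_self_eq_norm_sq _
    linarith
  -- compute deriv (σ • g1)
  have hD1eq : deriv (fun y => σt t y • deriv (η t) y)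
      = fun x => σt t x • deriv (deriv (η t)) x + deriv (σt t) x • deriv (η t) x :=
    funext fun x => ((hσd x).smul (hg1d x)).deriv
  -- the flow identity rewritten
  have hflowA : (fun r => fderiv ℝ (fun p : ℝ × ℝ => η p.1 p.2) (t, r) (1, 0))
      = fun r => ((L t) ^ 2)⁻¹ • (σt t r • deriv (deriv (η t)) r
          + deriv (σt t) r • deriv (η t) r) := by
    funext r
    have h1 : fderiv ℝ (fun p : ℝ × ℝ => η p.1 p.2) (t, r) (1, 0)
        = deriv (fun u => η u r) t := ((pd_t t r).deriv).symm
    rw [h1, hflow t r, hD1eq]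
  -- second s-derivative of flow RHS
  have hD2 : HasDerivAt (fun r => ((L t) ^ 2)⁻¹ • (σt t r • deriv (deriv (η t)) r
        + deriv (σt t) r • deriv (η t) r))
      (((L t) ^ 2)⁻¹ • (σt t 0 • deriv (deriv (deriv (η t))) 0
        + deriv (σt t) 0 • deriv (deriv (η t)) 0
        + (deriv (σt t) 0 • deriv (deriv (η t)) 0
          + deriv (deriv (σt t)) 0 • deriv (η t) 0))) 0 :=
    by convert (((hσd 0).smul (hg2d 0)).add ((hσ1d 0).smul (hg1d 0))).const_smul ((L t) ^ 2)⁻¹ using 1 <;> rfl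
  -- identify mixed partials
  have hmix : fderiv ℝ (fderiv ℝ (fun p : ℝ × ℝ => η p.1 p.2)) (t, 0) (0, 1) (1, 0)
      = ((L t) ^ 2)⁻¹ • (σt t 0 • deriv (deriv (deriv (η t))) 0
        + deriv (σt t) 0 • deriv (deriv (η t)) 0
        + (deriv (σt t) 0 • deriv (deriv (η t)) 0
          + deriv (deriv (σt t)) 0 • deriv (η t) 0)) := by
    have h := hflowA ▸ hsg
    exact h.unique hD2
  have hmix2 : fderiv ℝ (fderiv ℝ (fun p : ℝ × ℝ => η p.1 p.2)) (t, 0) (1, 0) (0, 1)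
      = ((L t) ^ 2)⁻¹ • (σt t 0 • deriv (deriv (deriv (η t))) 0
        + deriv (σt t) 0 • deriv (deriv (η t)) 0
        + (deriv (σt t) 0 • deriv (deriv (η t)) 0
          + deriv (deriv (σt t)) 0 • deriv (η t) 0)) := by
    rw [hsymm]; exact hmix
  -- ∂_t of ∂_s η(·,0) at t
  have htg2 : HasDerivAt (fun u => deriv (η u) 0)
      (((L t) ^ 2)⁻¹ • (σt t 0 • deriv (deriv (deriv (η t))) 0
        + deriv (σt t) 0 • deriv (deriv (η t)) 0
        + (deriv (σt t) 0 • deriv (deriv (η t)) 0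
          + deriv (deriv (σt t)) 0 • deriv (η t) 0))) t := by
    have h1 : (fun u => deriv (η u) 0)
        = fun u => fderiv ℝ (fun p : ℝ × ℝ => η p.1 p.2) (u, 0) (0, 1) :=
      funext fun u => (pd_s u 0).deriv
    rw [h1, ← hmix2]
    exact htg
  have hLne : L t ≠ 0 := (hLpos t).ne'
  have hinner : (inner ℝ (((L t) ^ 2)⁻¹ • (σt t 0 • deriv (deriv (deriv (η t))) 0
        + deriv (σt t) 0 • deriv (deriv (η t)) 0
        + (deriv (σt t) 0 • deriv (deriv (η t)) 0
          + deriv (deriv (σt t)) 0 • deriv (η t) 0))) (deriv (η t) 0) : ℝ)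
      = -((L t) ^ 2)⁻¹ * ∫ r in (0:ℝ)..1, σt t r * ‖deriv (deriv (η t)) r‖ ^ 2 := by
    simp only [inner_add_left, real_inner_smul_left, real_inner_self_eq_norm_sq,
      horth 0, horth3]
    rw [hspeed]
    have hm := hmult t 0
    field_simp at hm ⊢
    nlinarith [hm, sq_nonneg (L t)]
  -- derivative of L²
  have hPval : HasDerivAt (fun u => (L u) ^ 2)
      (2 * (-((L t) ^ 2)⁻¹ * ∫ r in (0:ℝ)..1, σt t r * ‖deriv (deriv (η t)) r‖ ^ 2)) t := by
    have h1 := htg2.inner ℝ htg2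
    have h2 : (fun u => (inner ℝ (deriv (η u) 0) (deriv (η u) 0) : ℝ))
        = fun u => (L u) ^ 2 := by
      funext u
      rw [real_inner_self_eq_norm_sq, hspeed]
    rw [h2] at h1
    refine h1.congr_deriv ?_
    rw [hinner, real_inner_comm, hinner]
    ring
  -- conclude via L = sqrt (L²)
  have hsq : HasDerivAt (fun u => Real.sqrt ((L u) ^ 2))
      (1 / (2 * Real.sqrt ((L t) ^ 2))
        * (2 * (-((L t) ^ 2)⁻¹ * ∫ r in (0:ℝ)..1, σt t r * ‖deriv (deriv (η t)) r‖ ^ 2))) t :=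
    (Real.hasDerivAt_sqrt (pow_ne_zero _ hLne)).comp t hPval
  have hLfun : (fun u => Real.sqrt ((L u) ^ 2)) = L := by
    funext u
    exact Real.sqrt_sq (hLpos u).le
  rw [hLfun] at hsq
  rw [hsq.deriv, Real.sqrt_sq (hLpos t).le]
  field_simp
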